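/- arXiv:gr-qc/9912013 — 3 statements merged into one kernel-verified Lean document; each statement's English description precedes it below -/
import Mathlib

section
/- For s > 0 and a constant c with c²s ≠ 1 and c√s ≠ −1, the functions u(s) = cs/(c²s − 1) and v(s) = −√s/(c√s + 1) satisfy the system: 2s^{3/2}v' + v² = 0; 2s^{3/2}u' + 2s^{3/2}v' + 2u² + 2uv + v² = 0; u√s + v√s + 2uv + v² = 0. -/
open Real

/-! Both derivatives are explicit: `u' = -c / (c²s - 1)²` and `v' = -1 / (2√s (c√s + 1)²)`.
Writing `s = r²` with `r = √s > 0`, each of the three equations then becomes a rational identity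
in `r` and `c`. -/

lemma hasDerivAt_mul_div_sq_mul_sub_one {c s : ℝ} (h : c ^ 2 * s ≠ 1) :
    HasDerivAt (fun t => c * t / (c ^ 2 * t - 1)) (-c / (c ^ 2 * s - 1) ^ 2) s := by
  have hnum : HasDerivAt (fun t : ℝ => c * t) c s := by
    simpa using (hasDerivAt_id s).const_mul c
  have hden : HasDerivAt (fun t : ℝ => c ^ 2 * t - 1) (c ^ 2) s := by
    simpa using ((hasDerivAt_id s).const_mul (c ^ 2)).sub_const 1
  exact (hnum.div hden (sub_ne_zero.mpr h)).congr_deriv (by ring)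

lemma hasDerivAt_neg_sqrt_div {c s : ℝ} (hs : 0 < s) (h : c * √s ≠ -1) :
    HasDerivAt (fun t => -√t / (c * √t + 1)) (-1 / (2 * √s * (c * √s + 1) ^ 2)) s := by
  have hsqrt := hasDerivAt_sqrt hs.ne'
  have hnum : HasDerivAt (fun t => -√t) (-(1 / (2 * √s))) s := hsqrt.neg
  have hden : c * √s + 1 ≠ 0 := fun h' => h (eq_neg_of_add_eq_zero_left h')
  refine (hnum.div ((hsqrt.const_mul c).add_const 1) hden).congr_deriv ?_
  have : √s ≠ 0 := (sqrt_pos.mpr hs).ne'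
  field_simp
  ring

/-- `u(s) = cs/(c²s−1)` and `v(s) = −√s/(c√s+1)` solve the GR-type
(`ρ₁ = 0`) reduced system. -/
theorem schwarzschild_radial_functions_solve_GR_system
    (c s : ℝ) (hs : 0 < s) (h1 : c ^ 2 * s ≠ 1) (h2 : c * Real.sqrt s ≠ -1) :
    let u : ℝ → ℝ := fun t => c * t / (c ^ 2 * t - 1)
    let v : ℝ → ℝ := fun t => -Real.sqrt t / (c * Real.sqrt t + 1)
    2 * (s * Real.sqrt s) * deriv v s + (v s) ^ 2 = 0
    ∧ 2 * (s * Real.sqrt s) * deriv u s + 2 * (s * Real.sqrt s) * deriv v s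
        + 2 * (u s) ^ 2 + 2 * u s * v s + (v s) ^ 2 = 0
    ∧ u s * Real.sqrt s + v s * Real.sqrt s + 2 * u s * v s + (v s) ^ 2 = 0 := by
  intro u v
  rw [(hasDerivAt_mul_div_sq_mul_sub_one h1).deriv, (hasDerivAt_neg_sqrt_div hs h2).deriv]
  obtain ⟨r, hr, rfl⟩ : ∃ r > 0, r ^ 2 = s := ⟨√s, sqrt_pos.mpr hs, sq_sqrt hs.le⟩
  simp only [u, v, sqrt_sq hr.le] at h2 ⊢
  have hr0 : r ≠ 0 := hr.ne'
  have hplus : c * r + 1 ≠ 0 := fun h => h2 (eq_neg_of_add_eq_zero_left h)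
  have hminus : c ^ 2 * r ^ 2 - 1 ≠ 0 := sub_ne_zero.mpr h1
  -- `field_simp` meets these denominators with the factors in either order
  have hplus' : r * c + 1 ≠ 0 := by rwa [mul_comm]
  have hminus' : r ^ 2 * c ^ 2 - 1 ≠ 0 := by rwa [mul_comm]
  refine ⟨?_, ?_, ?_⟩ <;> field_simp <;> ring
end

section
/- Let a, b, ρ₁, ρ₃ be reals with ρ₁ ≠ 0, a ≠ 0, ρ₁ ≠ ρ₃, 3ρ₁ ≠ 2ρ₃, and ρ₁ + 2ρ₃ ≠ 0. Then the algebraic system (i) ρ₁(a + 2ab − 2b² + a²) + 2ρ₃(b + b²) = 0, (ii) ρ₁(2b + 4ab − a² + 2b²) + 2ρ₃(a + b + 2a² + 2ab + b²) = 0, (iii) ρ₁(2b + a² + 2b²) + 2ρ₃(a + b + 2ab + b²) = 0 has the unique solution a = 2ρ₁/(2ρ₃ − 3ρ₁), b = (ρ₁ − 2ρ₃)/(2ρ₃ − 3ρ₁). -/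
/-!
Subtracting (iii) from (ii) leaves `2a · E = 0` with `E = ρ₁(2b − a) + 2ρ₃a`, so `a ≠ 0` forces
the linear relation `E = 0`. Eliminating `b` from (i) with it leaves
`a (ρ₁ − ρ₃)(ρ₁ + 2ρ₃)((3ρ₁ − 2ρ₃)a + 2ρ₁) = 0`, and the nondegeneracy conditions reduce this to
a linear equation for `a`; then `E = 0` determines `b`.
-/

section PowerLawSystem

variable {a b ρ₁ ρ₃ : ℝ}

theorem linear_relation_of_eq_ii_of_eq_iii (ha : a ≠ 0)
    (h2 : ρ₁ * (2 * b + 4 * a * b - a ^ 2 + 2 * b ^ 2)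
      + 2 * ρ₃ * (a + b + 2 * a ^ 2 + 2 * a * b + b ^ 2) = 0)
    (h3 : ρ₁ * (2 * b + a ^ 2 + 2 * b ^ 2) + 2 * ρ₃ * (a + b + 2 * a * b + b ^ 2) = 0) :
    ρ₁ * (2 * b - a) + 2 * ρ₃ * a = 0 := by
  have h : (2 * a) * (ρ₁ * (2 * b - a) + 2 * ρ₃ * a) = 0 := by linear_combination h2 - h3
  exact (mul_eq_zero.mp h).resolve_left (mul_ne_zero two_ne_zero ha)

theorem eq_i_factor_of_linear_relation
    (h1 : ρ₁ * (a + 2 * a * b - 2 * b ^ 2 + a ^ 2) + 2 * ρ₃ * (b + b ^ 2) = 0)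
    (hE : ρ₁ * (2 * b - a) + 2 * ρ₃ * a = 0) :
    a * (ρ₁ - ρ₃) * (ρ₁ + 2 * ρ₃) * ((3 * ρ₁ - 2 * ρ₃) * a + 2 * ρ₁) = 0 := by
  linear_combination (2 * ρ₁ ^ 2) * h1 +
    (2 * ρ₁ * (ρ₁ - ρ₃) * b + a * (2 * ρ₃ ^ 2 - 3 * ρ₁ * ρ₃ - ρ₁ ^ 2) - 2 * ρ₁ * ρ₃) * hE

theorem eq_linear_of_eq_i_of_linear_relation (ha : a ≠ 0) (h13 : ρ₁ ≠ ρ₃)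
    (h12 : ρ₁ + 2 * ρ₃ ≠ 0)
    (h1 : ρ₁ * (a + 2 * a * b - 2 * b ^ 2 + a ^ 2) + 2 * ρ₃ * (b + b ^ 2) = 0)
    (hE : ρ₁ * (2 * b - a) + 2 * ρ₃ * a = 0) :
    (3 * ρ₁ - 2 * ρ₃) * a + 2 * ρ₁ = 0 := by
  have h := eq_i_factor_of_linear_relation h1 hE
  simpa [ha, sub_ne_zero.mpr h13, h12] using h

theorem eq_solution_of_linear (hd : 2 * ρ₃ - 3 * ρ₁ ≠ 0) (ha : a ≠ 0)
    (hE : ρ₁ * (2 * b - a) + 2 * ρ₃ * a = 0) (hlin : (3 * ρ₁ - 2 * ρ₃) * a + 2 * ρ₁ = 0) :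
    a = 2 * ρ₁ / (2 * ρ₃ - 3 * ρ₁) ∧ b = (ρ₁ - 2 * ρ₃) / (2 * ρ₃ - 3 * ρ₁) := by
  have hρ₁ : ρ₁ ≠ 0 := by
    rintro rfl
    have h : (2 * ρ₃ - 3 * 0) * a = 0 := by linear_combination -hlin
    exact ha ((mul_eq_zero.mp h).resolve_left hd)
  refine ⟨(eq_div_iff hd).mpr (by linear_combination -hlin), (eq_div_iff hd).mpr ?_⟩
  apply mul_left_cancel₀ (mul_ne_zero two_ne_zero hρ₁)
  linear_combination (2 * ρ₃ - 3 * ρ₁) * hE - (ρ₁ - 2 * ρ₃) * hlin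

theorem solution_satisfies_system
    (ha : a = 2 * ρ₁ / (2 * ρ₃ - 3 * ρ₁)) (hb : b = (ρ₁ - 2 * ρ₃) / (2 * ρ₃ - 3 * ρ₁)) :
    ρ₁ * (a + 2 * a * b - 2 * b ^ 2 + a ^ 2) + 2 * ρ₃ * (b + b ^ 2) = 0
      ∧ ρ₁ * (2 * b + 4 * a * b - a ^ 2 + 2 * b ^ 2)
          + 2 * ρ₃ * (a + b + 2 * a ^ 2 + 2 * a * b + b ^ 2) = 0
      ∧ ρ₁ * (2 * b + a ^ 2 + 2 * b ^ 2)
          + 2 * ρ₃ * (a + b + 2 * a * b + b ^ 2) = 0 := by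
  subst ha hb
  refine ⟨?_, ?_, ?_⟩ <;> field_simp <;> ring

end PowerLawSystem

theorem proportional_solution_unique_general
    (a b ρ₁ ρ₃ : ℝ) (ha : a ≠ 0) (h13 : ρ₁ ≠ ρ₃)
    (h32 : 3 * ρ₁ ≠ 2 * ρ₃) (h12 : ρ₁ + 2 * ρ₃ ≠ 0) :
    (ρ₁ * (a + 2 * a * b - 2 * b ^ 2 + a ^ 2) + 2 * ρ₃ * (b + b ^ 2) = 0
      ∧ ρ₁ * (2 * b + 4 * a * b - a ^ 2 + 2 * b ^ 2)
          + 2 * ρ₃ * (a + b + 2 * a ^ 2 + 2 * a * b + b ^ 2) = 0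
      ∧ ρ₁ * (2 * b + a ^ 2 + 2 * b ^ 2)
          + 2 * ρ₃ * (a + b + 2 * a * b + b ^ 2) = 0)
    ↔ (a = 2 * ρ₁ / (2 * ρ₃ - 3 * ρ₁) ∧ b = (ρ₁ - 2 * ρ₃) / (2 * ρ₃ - 3 * ρ₁)) := by
  have hd : 2 * ρ₃ - 3 * ρ₁ ≠ 0 := sub_ne_zero.mpr h32.symm
  constructor
  · rintro ⟨h1, h2, h3⟩
    have hE := linear_relation_of_eq_ii_of_eq_iii ha h2 h3
    exact eq_solution_of_linear hd ha hE (eq_linear_of_eq_i_of_linear_relation ha h13 h12 h1 hE)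
  · exact fun ⟨ha', hb'⟩ ↦ solution_satisfies_system ha' hb'

/-- in the generic case (`ρ₁ ≠ 0`, `a ≠ 0`, `ρ₁ ≠ ρ₃`, `3ρ₁ ≠ 2ρ₃`,
`ρ₁ + 2ρ₃ ≠ 0`) the algebraic system for the power-law ansatz holds iff
`a = 2ρ₁/(2ρ₃−3ρ₁)` and `b = (ρ₁−2ρ₃)/(2ρ₃−3ρ₁)`. -/
theorem proportional_solution_unique
    (a b ρ₁ ρ₃ : ℝ) (hρ₁ : ρ₁ ≠ 0) (ha : a ≠ 0) (h13 : ρ₁ ≠ ρ₃)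
    (h32 : 3 * ρ₁ ≠ 2 * ρ₃) (h12 : ρ₁ + 2 * ρ₃ ≠ 0) :
    (ρ₁ * (a + 2 * a * b - 2 * b ^ 2 + a ^ 2) + 2 * ρ₃ * (b + b ^ 2) = 0
      ∧ ρ₁ * (2 * b + 4 * a * b - a ^ 2 + 2 * b ^ 2)
          + 2 * ρ₃ * (a + b + 2 * a ^ 2 + 2 * a * b + b ^ 2) = 0
      ∧ ρ₁ * (2 * b + a ^ 2 + 2 * b ^ 2)
          + 2 * ρ₃ * (a + b + 2 * a * b + b ^ 2) = 0)
    ↔ (a = 2 * ρ₁ / (2 * ρ₃ - 3 * ρ₁) ∧ b = (ρ₁ - 2 * ρ₃) / (2 * ρ₃ - 3 * ρ₁)) :=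
  proportional_solution_unique_general a b ρ₁ ρ₃ ha h13 h32 h12
end

section
/- Let ρ₁, ρ₃ satisfy 3ρ₁ = 2ρ₃ with ρ₁ ≠ 0. Then the system ρ₁(a + 2ab − 2b² + a²) + 2ρ₃(b + b²) = 0, a(ρ₁(2b − a) + 2ρ₃a) = 0, (a+b)(ρ₁(2b − a) + 2ρ₃a) = 0 admits no real solution with a ≠ 0. -/
/-! When `2ρ₃ = 3ρ₁` the common factor `ρ₁(2b - a) + 2ρ₃a` of the last two equations collapses
to `2ρ₁(a + b)`, so `a ≠ 0` forces `b = -a`; on that line the first equation reduces to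
`-2ρ₁a = 0`. -/

section

variable {ρ₁ ρ₃ : ℝ}

theorem common_factor_eq_of_three_mul_eq (h : 3 * ρ₁ = 2 * ρ₃) (a b : ℝ) :
    ρ₁ * (2 * b - a) + 2 * ρ₃ * a = 2 * ρ₁ * (a + b) := by
  linear_combination -a * h

theorem first_equation_at_neg_of_three_mul_eq (h : 3 * ρ₁ = 2 * ρ₃) (a : ℝ) :
    ρ₁ * (a + 2 * a * -a - 2 * (-a) ^ 2 + a ^ 2) + 2 * ρ₃ * (-a + (-a) ^ 2) = -2 * ρ₁ * a := by
  linear_combination (a - a ^ 2) * h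

end

/-- if `3ρ₁ = 2ρ₃` and `ρ₁ ≠ 0`, the algebraic system for the power-law
ansatz has no real solution with `a ≠ 0`. -/
theorem no_proportional_solution_when_three_rho1_eq_two_rho3
    (ρ₁ ρ₃ : ℝ) (h : 3 * ρ₁ = 2 * ρ₃) (hρ₁ : ρ₁ ≠ 0) :
    ¬ ∃ a b : ℝ, a ≠ 0
      ∧ ρ₁ * (a + 2 * a * b - 2 * b ^ 2 + a ^ 2) + 2 * ρ₃ * (b + b ^ 2) = 0
      ∧ a * (ρ₁ * (2 * b - a) + 2 * ρ₃ * a) = 0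
      ∧ (a + b) * (ρ₁ * (2 * b - a) + 2 * ρ₃ * a) = 0 := by
  rintro ⟨a, b, ha, h₁, h₂, -⟩
  rw [common_factor_eq_of_three_mul_eq h] at h₂
  obtain rfl : b = -a := by
    have hab : a + b = 0 := by simpa [ha, hρ₁] using h₂
    linarith
  rw [first_equation_at_neg_of_three_mul_eq h] at h₁
  simp [hρ₁, ha] at h₁
end
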